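/- The vorticity of the preferred vector field is expressed through the contortion tensor by Ω_{ab} := h_a^c h_b^d ∇_{[d} v_{c]} = −K_{c[ab]} v^c − v_{[a} K_{b]cd} v^c v^d. -/

import Mathlib

open Finset

noncomputable section

/- Index set {0,1,2,3}. -/
abbrev Idx := Fin 4

/-- The Minkowski metric η_{ab} = diag(−1,1,1,1) (which equals its inverse η^{ab}). -/
def ηm (a b : Idx) : ℝ := if a = b then (if a = (0 : Idx) then -1 else 1) else 0

/-- Lowered components of a vector: v_a = η_{ab} v^b. -/
def lo (v : Idx → ℝ) (a : Idx) : ℝ := ∑ b, ηm a b * v b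

/-- Mixed projection tensor h_a^b = δ_a^b + v_a v^b. -/
def hmix (v : Idx → ℝ) (a b : Idx) : ℝ := (if a = b then 1 else 0) + lo v a * v b

/-- Fully lowered projection tensor h_{ab} = η_{ab} + v_a v_b. -/
def hlo (v : Idx → ℝ) (a b : Idx) : ℝ := ηm a b + lo v a * lo v b

/- Rank-3 tensors (all indices lowered). -/
abbrev T3 := Idx → Idx → Idx → ℝ

/-- The covariant derivative of the preferred vector field: ∇_a v_b := K_{bca} v^c. -/
def nab (K : T3) (v : Idx → ℝ) (a b : Idx) : ℝ := ∑ c, K b c a * v c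

/-- The acceleration v̇_a = K_{abc} v^b v^c. -/
def vdot (K : T3) (v : Idx → ℝ) (a : Idx) : ℝ := ∑ b, ∑ c, K a b c * v b * v c

/-!
Contracting `v` into both of the first two (antisymmetric) indices of `K` gives zero, so `v^c ∇_d v_c = 0`
and projecting with `h` reduces to `h_a^c h_b^d ∇_d v_c = ∇_b v_a + v_b v̇_a`. Antisymmetrizing in
`a, b` and using `K_{acb} = −K_{cab}` to bring the contracted index to the front gives the formula.
-/

theorem sum_sum_mul_mul_eq_zero_of_antisymm {ι R : Type*} [Fintype ι] [CommRing R]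
    [NoZeroDivisors R] [CharZero R] (B : ι → ι → R) (hB : ∀ i j, B i j = -B j i) (v : ι → R) :
    ∑ i, ∑ j, B i j * v i * v j = 0 := by
  refine CharZero.eq_neg_self_iff.mp ?_
  calc ∑ i, ∑ j, B i j * v i * v j
      = ∑ j, ∑ i, B i j * v i * v j := Finset.sum_comm
    _ = -∑ i, ∑ j, B i j * v i * v j := by
      simp only [← Finset.sum_neg_distrib]
      exact Finset.sum_congr rfl fun i _ => Finset.sum_congr rfl fun j _ => by rw [hB]; ring

lemma sum_hmix_mul (v : Idx → ℝ) (a : Idx) (F : Idx → ℝ) :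
    ∑ c, hmix v a c * F c = F a + lo v a * ∑ c, v c * F c := by
  simp only [hmix, add_mul, Finset.sum_add_distrib, ite_mul, one_mul, zero_mul,
    Finset.sum_ite_eq, Finset.mem_univ, if_true, Finset.mul_sum, mul_assoc]

section Contortion

variable (K : T3) (v : Idx → ℝ)

lemma sum_mul_nab_eq_zero (hK : ∀ a b c, K a b c = -K b a c) (d : Idx) :
    ∑ c, v c * nab K v d c = 0 := by
  simp only [nab, Finset.mul_sum]
  rw [← sum_sum_mul_mul_eq_zero_of_antisymm (fun c e => K c e d) (fun c e => hK c e d) v]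
  exact Finset.sum_congr rfl fun _ _ => Finset.sum_congr rfl fun _ _ => by ring

lemma sum_mul_nab_eq_vdot (a : Idx) : ∑ d, v d * nab K v d a = vdot K v a := by
  simp only [nab, vdot, Finset.mul_sum]
  rw [Finset.sum_comm]
  exact Finset.sum_congr rfl fun _ _ => Finset.sum_congr rfl fun _ _ => by ring

lemma sum_hmix_hmix_mul_nab (hK : ∀ a b c, K a b c = -K b a c) (a b : Idx) :
    ∑ c, ∑ d, hmix v a c * hmix v b d * nab K v d c = nab K v b a + lo v b * vdot K v a := by
  have hproj : ∀ d, ∑ c, hmix v a c * nab K v d c = nab K v d a := fun d => by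
    rw [sum_hmix_mul, sum_mul_nab_eq_zero K v hK, mul_zero, add_zero]
  calc ∑ c, ∑ d, hmix v a c * hmix v b d * nab K v d c
      = ∑ d, hmix v b d * ∑ c, hmix v a c * nab K v d c := by
        rw [Finset.sum_comm]
        simp only [Finset.mul_sum]
        exact Finset.sum_congr rfl fun _ _ => Finset.sum_congr rfl fun _ _ => by ring
    _ = nab K v b a + lo v b * vdot K v a := by
        simp only [hproj, sum_hmix_mul, sum_mul_nab_eq_vdot]

lemma nab_eq_neg_sum (hK : ∀ a b c, K a b c = -K b a c) (a b : Idx) :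
    nab K v b a = -∑ c, K c a b * v c := by
  simp only [nab, hK a, neg_mul, Finset.sum_neg_distrib]

end Contortion

theorem statement8_general (v : Idx → ℝ)
    (K : T3) (hK : ∀ a b c, K a b c = -K b a c) :
    ∀ a b : Idx,
      (∑ c, ∑ d, hmix v a c * hmix v b d * ((nab K v d c - nab K v c d) / 2))
        = -(∑ c, ((K c a b - K c b a) / 2) * v c)
          - (lo v a * vdot K v b - lo v b * vdot K v a) / 2 := by
  intro a b
  have hsplit : ∑ c, ∑ d, hmix v a c * hmix v b d * ((nab K v d c - nab K v c d) / 2)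
      = ((∑ c, ∑ d, hmix v a c * hmix v b d * nab K v d c)
        - ∑ d, ∑ c, hmix v b d * hmix v a c * nab K v c d) / 2 := by
    rw [Finset.sum_comm (f := fun d c => hmix v b d * hmix v a c * nab K v c d),
      ← Finset.sum_sub_distrib, Finset.sum_div]
    exact Finset.sum_congr rfl fun _ _ => by
      rw [← Finset.sum_sub_distrib, Finset.sum_div]
      exact Finset.sum_congr rfl fun _ _ => by ring
  rw [hsplit, sum_hmix_hmix_mul_nab K v hK, sum_hmix_hmix_mul_nab K v hK,
    nab_eq_neg_sum K v hK, nab_eq_neg_sum K v hK]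
  simp only [sub_div, sub_mul, Finset.sum_sub_distrib, div_mul_eq_mul_div, ← Finset.sum_div]
  ring

/-- The vorticity of the preferred vector field,
`Ω_{ab} = h_a^c h_b^d ∇_{[d} v_{c]}`, is expressed through the contortion tensor as
`Ω_{ab} = −K_{c[ab]} v^c − v_{[a} K_{b]cd} v^c v^d`. -/
theorem statement8 (v : Idx → ℝ) (hv : (∑ a, lo v a * v a) = -1)
    (K : T3) (hK : ∀ a b c, K a b c = -K b a c) :
    ∀ a b : Idx,
      (∑ c, ∑ d, hmix v a c * hmix v b d * ((nab K v d c - nab K v c d) / 2))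
        = -(∑ c, ((K c a b - K c b a) / 2) * v c)
          - (lo v a * vdot K v b - lo v b * vdot K v a) / 2 :=
  statement8_general v K hK
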